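/- Let n ≥ 2 be an integer and (f,g) ∈ C_n(I). Define sequences of functions (φ_i) and (ψ_i) on I by the recursions φ₀ := 0, ψ₀ := 1, and for i ∈ {0,…,n−1}: φ_{i+1} := φ_i' + φ_i·Φ_{f,g} + ψ_i and ψ_{i+1} := φ_i·Ψ_{f,g} + ψ_i'. Then for all i,j ∈ {0,…,n}, the Wronskian identity W^{i,j}_{f,g} = (φ_i·ψ_j − φ_j·ψ_i)·W^{1,0}_{f,g} holds on I; in particular, W^{i,0}_{f,g} = φ_i·W^{1,0}_{f,g} and W^{i,1}_{f,g} = −ψ_i·W^{1,0}_{f,g} for all i ∈ {0,…,n}. -/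

import Mathlib

open MeasureTheory Set

/-- The generalized quasiarithmetic mean `M_{f,g;μ}` on the interval `I`. -/
noncomputable def Mmean (I : Set ℝ) (f g : ℝ → ℝ) (μ : Measure ℝ) (x y : ℝ) : ℝ :=
  Function.invFunOn (fun t => f t / g t) I
    ((∫ t in Set.Icc (0:ℝ) 1, f (t * x + (1 - t) * y) ∂μ) /
      (∫ t in Set.Icc (0:ℝ) 1, g (t * x + (1 - t) * y) ∂μ))

/-- First moment `μ̂₁` of a measure on `[0,1]`. -/
noncomputable def mom1 (μ : Measure ℝ) : ℝ := ∫ t in Set.Icc (0:ℝ) 1, t ∂μ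

/-- `n`-th centralized moment `μ_n` of a measure on `[0,1]`. -/
noncomputable def cmom (μ : Measure ℝ) (n : ℕ) : ℝ :=
  ∫ t in Set.Icc (0:ℝ) 1, (t - mom1 μ) ^ n ∂μ

/-- The auxiliary function `m_{x;f,g;μ}`. -/
noncomputable def mfun (I : Set ℝ) (f g : ℝ → ℝ) (μ : Measure ℝ) (x : ℝ) : ℝ → ℝ :=
  fun u => Mmean I f g μ (x + (1 - mom1 μ) * u) (x - mom1 μ * u)

/-- The `(i,j)`-order Wronskian `W^{i,j}_{f,g} = f⁽ⁱ⁾g⁽ʲ⁾ − f⁽ʲ⁾g⁽ⁱ⁾`. -/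
noncomputable def Wr (i j : ℕ) (f g : ℝ → ℝ) : ℝ → ℝ :=
  fun x => iteratedDeriv i f x * iteratedDeriv j g x - iteratedDeriv j f x * iteratedDeriv i g x

/-- `Φ_{f,g} = W^{2,0}/W^{1,0}`. -/
noncomputable def Phi (f g : ℝ → ℝ) : ℝ → ℝ := fun x => Wr 2 0 f g x / Wr 1 0 f g x

/-- `Ψ_{f,g} = −W^{2,1}/W^{1,0}`. -/
noncomputable def Psi (f g : ℝ → ℝ) : ℝ → ℝ := fun x => -(Wr 2 1 f g x / Wr 1 0 f g x)

/-- The class `𝒞_n(I)` for `n ≥ 1`. -/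
def ClassC (n : ℕ) (I : Set ℝ) (f g : ℝ → ℝ) : Prop :=
  ContDiffOn ℝ n f I ∧ ContDiffOn ℝ n g I ∧ (∀ x ∈ I, 0 < g x) ∧
    ∀ x ∈ I, Wr 1 0 f g x ≠ 0

/-- The class `𝒞₀(I)`. -/
def ClassC0 (I : Set ℝ) (f g : ℝ → ℝ) : Prop :=
  ContinuousOn f I ∧ ContinuousOn g I ∧ (∀ x ∈ I, 0 < g x) ∧
    (StrictMonoOn (fun x => f x / g x) I ∨ StrictAntiOn (fun x => f x / g x) I)

/-- Equivalence of pairs: `(f,g) ∼ (F,G)`. -/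
def EquivPair (I : Set ℝ) (f g F G : ℝ → ℝ) : Prop :=
  ∃ a b c d : ℝ, a * d ≠ b * c ∧
    ∀ x ∈ I, F x = a * f x + b * g x ∧ G x = c * f x + d * g x

/-- Equality of two two-variable means near the diagonal of `I²`. -/
def EqualNearDiag (I : Set ℝ) (M N : ℝ → ℝ → ℝ) : Prop :=
  ∃ U : Set (ℝ × ℝ), IsOpen U ∧ U ⊆ I ×ˢ I ∧
    I ⊆ closure {y | y ∈ I ∧ (y, y) ∈ U} ∧
    ∀ p ∈ U, M p.1 p.2 = N p.1 p.2

/-- The quasiarithmetic mean `A_φ`. -/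
noncomputable def QAmean (I : Set ℝ) (φ : ℝ → ℝ) (x y : ℝ) : ℝ :=
  Function.invFunOn φ I ((φ x + φ y) / 2)

/-- The sine-type function `S_t`. -/
noncomputable def Sfun (t x : ℝ) : ℝ :=
  if t < 0 then Real.sin (Real.sqrt (-t) * x)
  else if t = 0 then x
  else Real.sinh (Real.sqrt t * x)

/-- The cosine-type function `C_t`. -/
noncomputable def Cfun (t x : ℝ) : ℝ :=
  if t < 0 then Real.cos (Real.sqrt (-t) * x)
  else if t = 0 then 1
  else Real.cosh (Real.sqrt t * x)

/-- The real (sign-preserving) cube root. -/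
noncomputable def cbrt (x : ℝ) : ℝ :=
  if x < 0 then -((-x) ^ ((1:ℝ)/3)) else x ^ ((1:ℝ)/3)


/-! Writing `W := W^{1,0}_{f,g}`, one shows by induction on `i` that `φᵢ = W^{i,0}/W` and
`ψᵢ = −W^{i,1}/W` on `I`: since `(W^{i,j})' = W^{i+1,j} + W^{i,j+1}`, the quotient rule turns the
recursion for `φ` into a tautology and the one for `ψ` into the Plücker relation among
`W^{i,2}, W^{i,1}, W^{i,0}`. The Plücker relation
`W^{i,j} W^{1,0} = W^{i,1} W^{j,0} − W^{i,0} W^{j,1}` then gives the general identity. -/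

theorem ContDiffAt.differentiableAt_iteratedDeriv {𝕜 F : Type*} [NontriviallyNormedField 𝕜]
    [NormedAddCommGroup F] [NormedSpace 𝕜 F] {f : 𝕜 → F} {n : WithTop ℕ∞} {m : ℕ} {x : 𝕜}
    (h : ContDiffAt 𝕜 n f x) (hmn : m < n) :
    DifferentiableAt 𝕜 (iteratedDeriv m f) x := by
  rw [iteratedDeriv_eq_equiv_comp]
  exact (ContinuousMultilinearMap.piFieldEquiv 𝕜 (Fin m) F).symm.differentiableAt.comp x
    (h.differentiableAt_iteratedFDeriv hmn)

namespace Wr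

@[simp]
theorem self_eq_zero (i : ℕ) (f g : ℝ → ℝ) (x : ℝ) : Wr i i f g x = 0 := by
  simp only [Wr]; ring

theorem swap (i j : ℕ) (f g : ℝ → ℝ) (x : ℝ) : Wr j i f g x = -Wr i j f g x := by
  simp only [Wr]; ring

theorem plucker (a b c d : ℕ) (f g : ℝ → ℝ) (x : ℝ) :
    Wr a b f g x * Wr c d f g x = Wr a c f g x * Wr b d f g x - Wr a d f g x * Wr b c f g x := by
  simp only [Wr]; ring

variable {f g : ℝ → ℝ} {x : ℝ}

theorem hasDerivAt {n : ℕ} {i j : ℕ} (hf : ContDiffAt ℝ n f x) (hg : ContDiffAt ℝ n g x)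
    (hi : i < n) (hj : j < n) :
    HasDerivAt (Wr i j f g) (Wr (i + 1) j f g x + Wr i (j + 1) f g x) x := by
  have hfi := (hf.differentiableAt_iteratedDeriv (by exact_mod_cast hi)).hasDerivAt
  have hgi := (hg.differentiableAt_iteratedDeriv (by exact_mod_cast hi)).hasDerivAt
  have hfj := (hf.differentiableAt_iteratedDeriv (by exact_mod_cast hj)).hasDerivAt
  have hgj := (hg.differentiableAt_iteratedDeriv (by exact_mod_cast hj)).hasDerivAt
  rw [← iteratedDeriv_succ] at hfi hgi hfj hgj
  exact ((hfi.mul hgj).sub (hfj.mul hgi)).congr_deriv (by simp only [Wr]; ring)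

theorem hasDerivAt_div_one_zero {n i j : ℕ} (hf : ContDiffAt ℝ n f x) (hg : ContDiffAt ℝ n g x)
    (hn : 2 ≤ n) (hi : i < n) (hj : j < n) (hW : Wr 1 0 f g x ≠ 0) :
    HasDerivAt (fun y => Wr i j f g y / Wr 1 0 f g y)
      (((Wr (i + 1) j f g x + Wr i (j + 1) f g x) * Wr 1 0 f g x
        - Wr i j f g x * Wr 2 0 f g x) / Wr 1 0 f g x ^ 2) x := by
  have hW' := hasDerivAt hf hg (i := 1) (j := 0) (by omega) (by omega)
  rw [self_eq_zero, add_zero] at hW'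
  exact (hasDerivAt hf hg hi hj).div hW' hW

end Wr

theorem eq_Wr_div_of_rec {I : Set ℝ} (hI : IsOpen I) {n : ℕ} (hn : 2 ≤ n) {f g : ℝ → ℝ}
    (hf : ContDiffOn ℝ n f I) (hg : ContDiffOn ℝ n g I) (hW : ∀ x ∈ I, Wr 1 0 f g x ≠ 0)
    {φ ψ : ℕ → ℝ → ℝ} (hφ0 : ∀ x ∈ I, φ 0 x = 0) (hψ0 : ∀ x ∈ I, ψ 0 x = 1)
    (hrec : ∀ i < n, ∀ x ∈ I,
      φ (i + 1) x = deriv (φ i) x + φ i x * Phi f g x + ψ i x ∧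
      ψ (i + 1) x = φ i x * Psi f g x + deriv (ψ i) x) :
    ∀ i ≤ n, ∀ x ∈ I,
      φ i x = Wr i 0 f g x / Wr 1 0 f g x ∧ ψ i x = -Wr i 1 f g x / Wr 1 0 f g x := by
  intro i
  induction i with
  | zero =>
    intro _ x hx
    have hWx := hW x hx
    refine ⟨by simp [hφ0 x hx], ?_⟩
    rw [hψ0 x hx, Wr.swap 1 0, neg_neg, div_self hWx]
  | succ i ih =>
    intro hi x hx
    have hin : i < n := hi
    have hWx := hW x hx
    have hfx := hf.contDiffAt (hI.mem_nhds hx)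
    have hgx := hg.contDiffAt (hI.mem_nhds hx)
    have hφ' : deriv (φ i) x = deriv (fun y => Wr i 0 f g y / Wr 1 0 f g y) x :=
      Filter.EventuallyEq.deriv_eq <| Filter.mem_of_superset (hI.mem_nhds hx)
        fun y hy => (ih hin.le y hy).1
    have hψ' : deriv (ψ i) x = -deriv (fun y => Wr i 1 f g y / Wr 1 0 f g y) x := by
      rw [← deriv.neg]
      exact Filter.EventuallyEq.deriv_eq <| Filter.mem_of_superset (hI.mem_nhds hx)
        fun y hy => (ih hin.le y hy).2.trans (neg_div _ _)
    rw [(Wr.hasDerivAt_div_one_zero hfx hgx hn hin (by omega) hWx).deriv] at hφ'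
    rw [(Wr.hasDerivAt_div_one_zero hfx hgx hn hin (by omega) hWx).deriv] at hψ'
    simp only [zero_add, Nat.reduceAdd] at hφ' hψ'
    obtain ⟨hφi, hψi⟩ := ih hin.le x hx
    obtain ⟨hφr, hψr⟩ := hrec i hin x hx
    have plucker := Wr.plucker i 2 1 0 f g x
    constructor
    · rw [hφr, hφ', hφi, hψi, Phi]
      field_simp
      ring
    · rw [hψr, hψ', hφi, Psi]
      field_simp
      linear_combination -plucker

theorem statement17_general (I : Set ℝ) (hIopen : IsOpen I)
    (n : ℕ) (hn : 2 ≤ n) (f g : ℝ → ℝ) (hfg : ClassC n I f g)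
    (φ ψ : ℕ → ℝ → ℝ)
    (hφ0 : ∀ x ∈ I, φ 0 x = 0) (hψ0 : ∀ x ∈ I, ψ 0 x = 1)
    (hrec : ∀ i < n, ∀ x ∈ I,
      φ (i + 1) x = deriv (φ i) x + φ i x * Phi f g x + ψ i x ∧
      ψ (i + 1) x = φ i x * Psi f g x + deriv (ψ i) x) :
    (∀ i ≤ n, ∀ j ≤ n, ∀ x ∈ I,
      Wr i j f g x = (φ i x * ψ j x - φ j x * ψ i x) * Wr 1 0 f g x) ∧
    (∀ i ≤ n, ∀ x ∈ I,
      Wr i 0 f g x = φ i x * Wr 1 0 f g x ∧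
      Wr i 1 f g x = -(ψ i x) * Wr 1 0 f g x) := by
  obtain ⟨hf, hg, -, hW⟩ := hfg
  have key := eq_Wr_div_of_rec hIopen hn hf hg hW hφ0 hψ0 hrec
  refine ⟨fun i hi j hj x hx => ?_, fun i hi x hx => ?_⟩
  all_goals have hWx := hW x hx
  · rw [(key i hi x hx).1, (key i hi x hx).2, (key j hj x hx).1, (key j hj x hx).2]
    field_simp
    linear_combination Wr.plucker i j 1 0 f g x
  · rw [(key i hi x hx).1, (key i hi x hx).2]
    constructor <;> field_simp

/-- Wronskian identities via the recursive sequences `(φᵢ)`, `(ψᵢ)`. -/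
theorem statement17 (I : Set ℝ) (hIopen : IsOpen I) (hIne : I.Nonempty)
    (hIconn : I.OrdConnected)
    (n : ℕ) (hn : 2 ≤ n) (f g : ℝ → ℝ) (hfg : ClassC n I f g)
    (φ ψ : ℕ → ℝ → ℝ)
    (hφ0 : ∀ x ∈ I, φ 0 x = 0) (hψ0 : ∀ x ∈ I, ψ 0 x = 1)
    (hrec : ∀ i < n, ∀ x ∈ I,
      φ (i + 1) x = deriv (φ i) x + φ i x * Phi f g x + ψ i x ∧
      ψ (i + 1) x = φ i x * Psi f g x + deriv (ψ i) x) :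
    (∀ i ≤ n, ∀ j ≤ n, ∀ x ∈ I,
      Wr i j f g x = (φ i x * ψ j x - φ j x * ψ i x) * Wr 1 0 f g x) ∧
    (∀ i ≤ n, ∀ x ∈ I,
      Wr i 0 f g x = φ i x * Wr 1 0 f g x ∧
      Wr i 1 f g x = -(ψ i x) * Wr 1 0 f g x) :=
  statement17_general I hIopen n hn f g hfg φ ψ hφ0 hψ0 hrec
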